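/- If a norm ⦀·⦀ on ℝ^d is orthant-strictly monotonic, then the sequence of generalized top-k norms is strictly increasingly graded with respect to the ℓ0 pseudonorm: for every x ∈ ℝ^d and every l ∈ {0,1,…,d}, ℓ0(x) ≤ l if and only if ⦀x⦀^top_l = ⦀x⦀^top_d; equivalently, if ℓ0(x) = l ≥ 1 then ⦀x⦀^top_1 < ⦀x⦀^top_2 < ⋯ < ⦀x⦀^top_l = ⦀x⦀^top_{l+1} = ⋯ = ⦀x⦀^top_d = ⦀x⦀, and consequently ℓ0(x) = min{k ∈ {1,…,d} : ⦀x⦀^top_k = ⦀x⦀^top_d} for x ≠ 0. -/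
import Mathlib


open Finset Set

namespace OSMPaper

variable {d : ℕ}

/-- Standard inner product on `ℝ^d = Fin d → ℝ`. -/
def dot (x y : Fin d → ℝ) : ℝ := ∑ i, x i * y i

/-- `N` is a norm on `ℝ^d`. -/
def IsNorm (N : (Fin d → ℝ) → ℝ) : Prop :=
  (∀ x, 0 ≤ N x) ∧ (∀ x, N x = 0 ↔ x = 0) ∧
  (∀ (c : ℝ) (x : Fin d → ℝ), N (c • x) = |c| * N x) ∧
  (∀ x y, N (x + y) ≤ N x + N y)

/-- `proj K x = x_K`, the vector coinciding with `x` on `K` and zero outside `K`. -/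
def proj (K : Finset (Fin d)) (x : Fin d → ℝ) : Fin d → ℝ :=
  fun i => if i ∈ K then x i else 0

/-- The coordinate subspace `ℝ_K`. -/
def coordSubspace (K : Finset (Fin d)) : Set (Fin d → ℝ) :=
  {x | ∀ j, j ∉ K → x j = 0}

/-- Orthant-monotonic norm. -/
def OrthantMonotonic (N : (Fin d → ℝ) → ℝ) : Prop :=
  ∀ x x' : Fin d → ℝ, (∀ i, |x i| ≤ |x' i|) → (∀ i, 0 ≤ x i * x' i) → N x ≤ N x'

/-- Orthant-strictly monotonic norm. -/
def OrthantStrictlyMonotonic (N : (Fin d → ℝ) → ℝ) : Prop :=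
  ∀ x x' : Fin d → ℝ, (∀ i, |x i| ≤ |x' i|) → (∃ j, |x j| < |x' j|) →
    (∀ i, 0 ≤ x i * x' i) → N x < N x'

/-- Dual norm `⦀y⦀⋆ = sup_{N x ≤ 1} ⟨x, y⟩`. -/
noncomputable def dualNorm (N : (Fin d → ℝ) → ℝ) (y : Fin d → ℝ) : ℝ :=
  sSup {r | ∃ x, N x ≤ 1 ∧ r = dot x y}

/-- Support function of a set `S`. -/
noncomputable def suppFn (S : Set (Fin d → ℝ)) (y : Fin d → ℝ) : ℝ :=
  sSup {r | ∃ x ∈ S, r = dot x y}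

/-- Generalized top-`k` norm associated with the source norm `N`. -/
noncomputable def topNorm (N : (Fin d → ℝ) → ℝ) (k : ℕ) (x : Fin d → ℝ) : ℝ :=
  sSup {r | ∃ K : Finset (Fin d), K.card ≤ k ∧ r = N (proj K x)}

/-- Generalized `k`-support norm: the dual norm of the generalized top-`k` norm. -/
noncomputable def supportNorm (N : (Fin d → ℝ) → ℝ) (k : ℕ) : (Fin d → ℝ) → ℝ :=
  dualNorm (topNorm N k)

/-- The ℓ0 pseudonorm: the number of nonzero components. -/
noncomputable def l0 (x : Fin d → ℝ) : ℕ := Set.ncard {i | x i ≠ 0}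

/-- `x` is an extreme point of the convex set `C`. -/
def ExtremePt (C : Set (Fin d → ℝ)) (x : Fin d → ℝ) : Prop :=
  x ∈ C ∧ ∀ y ∈ C, ∀ z ∈ C, ∀ t : ℝ, 0 < t → t < 1 →
    x = t • y + (1 - t) • z → y = x ∧ z = x

section Aux

variable {N : (Fin d → ℝ) → ℝ} {x : Fin d → ℝ} {k : ℕ}

lemma proj_empty' (x : Fin d → ℝ) : proj (∅ : Finset (Fin d)) x = 0 := by
  funext i; simp [proj]

lemma proj_univ' (x : Fin d → ℝ) : proj (Finset.univ : Finset (Fin d)) x = x := by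
  funext i; simp [proj]

lemma om_of_osm (hosm : OrthantStrictlyMonotonic N) : OrthantMonotonic N := by
  intro x x' h1 h2
  by_cases h : ∃ j, |x j| < |x' j|
  · exact le_of_lt (hosm x x' h1 h h2)
  · push_neg at h
    have hx : x = x' := by
      funext i
      have heq : |x i| = |x' i| := le_antisymm (h1 i) (h i)
      rcases abs_eq_abs.mp heq with h' | h'
      · exact h'
      · have := h2 i
        nlinarith
    rw [hx]

lemma topSet_finite (N : (Fin d → ℝ) → ℝ) (k : ℕ) (x : Fin d → ℝ) :
    {r | ∃ K : Finset (Fin d), K.card ≤ k ∧ r = N (proj K x)}.Finite :=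
  Set.Finite.subset (Set.finite_range (fun K : Finset (Fin d) => N (proj K x)))
    (by rintro r ⟨K, _, rfl⟩; exact ⟨K, rfl⟩)

lemma topSet_nonempty (N : (Fin d → ℝ) → ℝ) (k : ℕ) (x : Fin d → ℝ) :
    {r | ∃ K : Finset (Fin d), K.card ≤ k ∧ r = N (proj K x)}.Nonempty :=
  ⟨N (proj (∅ : Finset (Fin d)) x), ∅, Nat.zero_le _, rfl⟩

lemma le_topNorm {K : Finset (Fin d)} (hK : K.card ≤ k) :
    N (proj K x) ≤ topNorm N k x :=
  le_csSup (topSet_finite N k x).bddAbove ⟨K, hK, rfl⟩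

lemma topNorm_le {c : ℝ} (h : ∀ K : Finset (Fin d), K.card ≤ k → N (proj K x) ≤ c) :
    topNorm N k x ≤ c :=
  csSup_le (topSet_nonempty N k x) (by rintro r ⟨K, hK, rfl⟩; exact h K hK)

lemma exists_topNorm (N : (Fin d → ℝ) → ℝ) (k : ℕ) (x : Fin d → ℝ) :
    ∃ K : Finset (Fin d), K.card ≤ k ∧ topNorm N k x = N (proj K x) :=
  (topSet_nonempty N k x).csSup_mem (topSet_finite N k x)

lemma proj_aux {K K' : Finset (Fin d)} (hsub : K ⊆ K') (i : Fin d) :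
    |proj K x i| ≤ |proj K' x i| ∧ 0 ≤ proj K x i * proj K' x i := by
  by_cases hK : i ∈ K
  · have hK' : i ∈ K' := hsub hK
    simp [proj, hK, hK', mul_self_nonneg]
  · simp [proj, hK]

lemma N_proj_mono (hosm : OrthantStrictlyMonotonic N) {K K' : Finset (Fin d)}
    (hsub : K ⊆ K') : N (proj K x) ≤ N (proj K' x) :=
  om_of_osm hosm _ _ (fun i => (proj_aux hsub i).1) (fun i => (proj_aux hsub i).2)

lemma N_proj_lt (hosm : OrthantStrictlyMonotonic N) {K K' : Finset (Fin d)}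
    (hsub : K ⊆ K') {j : Fin d} (hj : j ∈ K') (hjK : j ∉ K) (hxj : x j ≠ 0) :
    N (proj K x) < N (proj K' x) := by
  refine hosm _ _ (fun i => (proj_aux hsub i).1) ⟨j, ?_⟩ (fun i => (proj_aux hsub i).2)
  simp [proj, hj, hjK, abs_pos, hxj]

/-- The support of `x` as a finset. -/
noncomputable def supp (x : Fin d → ℝ) : Finset (Fin d) :=
  Finset.univ.filter (fun i => x i ≠ 0)

lemma l0_eq_card (x : Fin d → ℝ) : l0 x = (supp x).card := by
  classical
  rw [l0, Set.ncard_eq_toFinset_card']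
  congr 1
  ext i
  simp [supp]

lemma l0_le_d (x : Fin d → ℝ) : l0 x ≤ d := by
  rw [l0_eq_card]
  simpa using Finset.card_le_univ (supp x)

lemma proj_supp (x : Fin d → ℝ) : proj (supp x) x = x := by
  funext i
  by_cases h : x i = 0 <;> simp [proj, supp, h]

lemma proj_inter_supp (K : Finset (Fin d)) (x : Fin d → ℝ) :
    proj K x = proj (K ∩ supp x) x := by
  funext i
  by_cases hK : i ∈ K <;> by_cases h : x i = 0 <;> simp [proj, supp, hK, h]

lemma topNorm_top (hosm : OrthantStrictlyMonotonic N) (x : Fin d → ℝ) :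
    topNorm N d x = N x := by
  apply le_antisymm
  · refine topNorm_le (fun K _ => ?_)
    have := N_proj_mono (x := x) hosm (Finset.subset_univ K)
    rwa [proj_univ'] at this
  · have : N (proj (Finset.univ : Finset (Fin d)) x) ≤ topNorm N d x :=
      le_topNorm (by simp)
    rwa [proj_univ'] at this

lemma topNorm_eq_of_supp_le (hosm : OrthantStrictlyMonotonic N)
    (hl : l0 x ≤ k) (hk : k ≤ d) : topNorm N k x = topNorm N d x := by
  rw [topNorm_top hosm]
  apply le_antisymm
  · refine topNorm_le (fun K _ => ?_)
    have := N_proj_mono (x := x) hosm (Finset.subset_univ K)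
    rwa [proj_univ'] at this
  · have h1 : (supp x).card ≤ k := by rw [← l0_eq_card]; exact hl
    have := le_topNorm (x := x) (N := N) h1
    rwa [proj_supp] at this

lemma topNorm_lt_succ (hosm : OrthantStrictlyMonotonic N)
    (hk : k < l0 x) : topNorm N k x < topNorm N (k + 1) x := by
  classical
  obtain ⟨K₀, hK₀, hEq⟩ := exists_topNorm N k x
  set K₁ := K₀ ∩ supp x with hK₁def
  have hK₁card : K₁.card ≤ k :=
    le_trans (Finset.card_le_card (Finset.inter_subset_left)) hK₀
  have hlt : K₁.card < (supp x).card := by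
    rw [← l0_eq_card]; omega
  have hns : ¬ (supp x ⊆ K₁) := fun h => absurd (Finset.card_le_card h) (by omega)
  obtain ⟨j, hjs, hjK₁⟩ := Finset.not_subset.mp hns
  have hxj : x j ≠ 0 := by simpa [supp] using hjs
  set K₂ := insert j K₁ with hK₂def
  have hK₂card : K₂.card ≤ k + 1 :=
    le_trans (Finset.card_insert_le _ _) (by omega)
  calc topNorm N k x = N (proj K₁ x) := by rw [hEq, proj_inter_supp K₀ x]
    _ < N (proj K₂ x) :=
        N_proj_lt hosm (Finset.subset_insert _ _) (Finset.mem_insert_self _ _) hjK₁ hxj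
    _ ≤ topNorm N (k + 1) x := le_topNorm hK₂card

lemma l0_le_of_topNorm_eq (hosm : OrthantStrictlyMonotonic N) {l : ℕ}
    (h : topNorm N l x = topNorm N d x) : l0 x ≤ l := by
  by_contra hc
  push_neg at hc
  have hstrict := topNorm_lt_succ (x := x) hosm hc
  have hld : l + 1 ≤ d := le_trans hc (l0_le_d x)
  have hle : topNorm N (l + 1) x ≤ topNorm N d x := by
    rw [topNorm_top hosm]
    refine topNorm_le (fun K _ => ?_)
    have := N_proj_mono (x := x) hosm (Finset.subset_univ K)
    rwa [proj_univ'] at this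
  rw [h] at hstrict
  linarith

lemma one_le_l0 (hx : x ≠ 0) : 1 ≤ l0 x := by
  rw [l0_eq_card]
  rcases Function.ne_iff.mp hx with ⟨i, hi⟩
  have : i ∈ supp x := by simp only [supp, Finset.mem_filter, Finset.mem_univ, true_and]; exact hi
  exact Finset.card_pos.mpr ⟨i, this⟩

end Aux

/-- for an orthant-strictly monotonic source norm, the sequence
of generalized top-k norms is strictly increasingly graded with respect to the
ℓ0 pseudonorm. -/
theorem topNorm_strictly_increasingly_graded_of_orthantStrictlyMonotonic
    (hd : 0 < d) (N : (Fin d → ℝ) → ℝ) (hN : IsNorm N)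
    (hosm : OrthantStrictlyMonotonic N) :
    (∀ (x : Fin d → ℝ) (l : ℕ), l ≤ d →
      (l0 x ≤ l ↔ topNorm N l x = topNorm N d x)) ∧
    (∀ x : Fin d → ℝ, 1 ≤ l0 x →
      (∀ k : ℕ, 1 ≤ k → k < l0 x → topNorm N k x < topNorm N (k + 1) x) ∧
      (∀ k : ℕ, l0 x ≤ k → k ≤ d → topNorm N k x = topNorm N d x) ∧
      topNorm N d x = N x) ∧
    (∀ x : Fin d → ℝ, x ≠ 0 →
      l0 x = sInf {k : ℕ | 1 ≤ k ∧ k ≤ d ∧ topNorm N k x = topNorm N d x}) := by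
  refine ⟨?_, ?_, ?_⟩
  · intro x l hl
    constructor
    · intro h
      exact topNorm_eq_of_supp_le hosm h hl
    · intro h
      exact l0_le_of_topNorm_eq hosm h
  · intro x hx
    refine ⟨fun k _ hk => topNorm_lt_succ hosm hk,
      fun k hk1 hk2 => topNorm_eq_of_supp_le hosm hk1 hk2, topNorm_top hosm x⟩
  · intro x hx
    have h1 : 1 ≤ l0 x := one_le_l0 hx
    have hmem : l0 x ∈ {k : ℕ | 1 ≤ k ∧ k ≤ d ∧ topNorm N k x = topNorm N d x} :=
      ⟨h1, l0_le_d x, topNorm_eq_of_supp_le hosm le_rfl (l0_le_d x)⟩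
    refine le_antisymm ?_ (Nat.sInf_le hmem)
    refine le_csInf ⟨l0 x, hmem⟩ ?_
    rintro k ⟨_, _, hk⟩
    exact l0_le_of_topNorm_eq hosm hk

end OSMPaper
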